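/- arXiv:1603.06422 — 2 statements merged into one kernel-verified Lean document; each statement's English description precedes it below -/
import Mathlib

section
/- If player i can force play from v via U to T, and every vertex u ∈ T satisfies that i can force play from u via U to T', then i can force play from v via U to T'. -/
universe u

/-- A parity game: a directed graph with a total edge relation, a priority
function and an owner function (`true` = player even, `false` = player odd). -/
structure ParityGame (V : Type u) where
  edge : V → V → Prop
  total : ∀ v, ∃ w, edge v w
  prio : V → ℕ
  owner : V → Bool

namespace ParityGame

variable {V : Type u}

/-- A (history-dependent) strategy: given the history of previously visited
vertices and the current vertex, choose a successor.  Only the values at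
vertices owned by the given player matter. -/
abbrev Strategy (V : Type u) : Type u := List V → V → V

variable (G : ParityGame V)

/-- A strategy is valid for player `i` if it always proposes edges. -/
def ValidStrategy (i : Bool) (σ : Strategy V) : Prop :=
  ∀ h v, G.owner v = i → G.edge v (σ h v)

/-- A memoryless strategy only depends on the current vertex. -/
def Memoryless (σ : Strategy V) : Prop := ∀ h h' v, σ h v = σ h' v

/-- An (infinite) play is an infinite path in the game graph. -/
def IsPlay (p : ℕ → V) : Prop := ∀ n, G.edge (p n) (p (n + 1))

/-- The history of a play before position `n`. -/
def hist (p : ℕ → V) (n : ℕ) : List V := List.ofFn (fun k : Fin n => p k)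

/-- A play is consistent with a strategy `σ` of player `i` if at every vertex
owned by `i` the play follows `σ`. -/
def Consistent (i : Bool) (σ : Strategy V) (p : ℕ → V) : Prop :=
  ∀ n, G.owner (p n) = i → p (n + 1) = σ (hist p n) (p n)

/-- `G.ForcesVia i σ v U T`: every play from `v` consistent with `σ` reaches
`T`, all earlier vertices lying in `U`. -/
def ForcesVia (i : Bool) (σ : Strategy V) (v : V) (U T : Set V) : Prop :=
  ∀ p : ℕ → V, G.IsPlay p → G.Consistent i σ p → p 0 = v →
    ∃ n, p n ∈ T ∧ ∀ j < n, p j ∈ U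

/-- `v ⇒_{i,U} T`: player `i` has a memoryless strategy forcing every
consistent play from `v` to reach `T` while staying in `U` beforehand. -/
def Forces (i : Bool) (v : V) (U T : Set V) : Prop :=
  ∃ σ : Strategy V, G.ValidStrategy i σ ∧ Memoryless σ ∧ G.ForcesVia i σ v U T

/-- Every play from `v` consistent with `σ` stays in `U` forever. -/
def DivergesVia (i : Bool) (σ : Strategy V) (v : V) (U : Set V) : Prop :=
  ∀ p : ℕ → V, G.IsPlay p → G.Consistent i σ p → p 0 = v → ∀ n, p n ∈ U

/-- `v ⇒^ω_{i,U}`: player `i` has a memoryless strategy keeping all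
consistent plays from `v` forever inside `U`. -/
def Diverges (i : Bool) (v : V) (U : Set V) : Prop :=
  ∃ σ : Strategy V, G.ValidStrategy i σ ∧ Memoryless σ ∧ G.DivergesVia i σ v U

/-- Priority `k` occurs infinitely often on the play `p`. -/
def InfOften (p : ℕ → V) (k : ℕ) : Prop := ∀ N, ∃ n, N ≤ n ∧ G.prio (p n) = k

/-- Player even wins a play iff the least priority occurring infinitely often
is even. -/
def EvenWinsPlay (p : ℕ → V) : Prop := Even (sInf {k | G.InfOften p k})

/-- Player `i` wins the play `p`. -/
def WinsPlay (i : Bool) (p : ℕ → V) : Prop := G.EvenWinsPlay p ↔ i = true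

/-- `σ` is a winning strategy for player `i` from `v`. -/
def WinningFrom (i : Bool) (σ : Strategy V) (v : V) : Prop :=
  ∀ p : ℕ → V, G.IsPlay p → G.Consistent i σ p → p 0 = v → G.WinsPlay i p

end ParityGame

namespace ParityGame

variable {V : Type u} (G : ParityGame V)

/-- Every play consistent with `σ` from `u` reaches `T'` within `n` steps,
with all earlier vertices in `U`. -/
def Within (i : Bool) (σ : Strategy V) (u : V) (U T' : Set V) (n : ℕ) : Prop :=
  ∀ p : ℕ → V, G.IsPlay p → G.Consistent i σ p → p 0 = u →
    ∃ m ≤ n, p m ∈ T' ∧ ∀ j < m, p j ∈ U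

lemma consistent_iff {i : Bool} {σ : Strategy V} (hm : Memoryless σ) (p : ℕ → V) :
    G.Consistent i σ p ↔ ∀ n, G.owner (p n) = i → p (n + 1) = σ [] (p n) := by
  constructor
  · intro h n hn; rw [h n hn]; exact hm _ _ _
  · intro h n hn; rw [h n hn]; exact (hm _ _ _)

/-- A default step following `σ` at vertices of player `i`. -/
noncomputable def step (i : Bool) (σ : Strategy V) (w : V) : V :=
  if G.owner w = i then σ [] w else Classical.choose (G.total w)

lemma step_edge {i : Bool} {σ : Strategy V} (hv : G.ValidStrategy i σ) (w : V) :
    G.edge w (G.step i σ w) := by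
  unfold step; split
  · exact hv [] w ‹_›
  · exact Classical.choose_spec (G.total w)

lemma step_owner {i : Bool} (σ : Strategy V) {w : V} (h : G.owner w = i) :
    G.step i σ w = σ [] w := if_pos h

/-- The default play following `σ` from `u`. -/
noncomputable def playFrom (i : Bool) (σ : Strategy V) (u : V) : ℕ → V :=
  fun n => (G.step i σ)^[n] u

lemma playFrom_zero (i : Bool) (σ : Strategy V) (u : V) : G.playFrom i σ u 0 = u := rfl

lemma playFrom_succ (i : Bool) (σ : Strategy V) (u : V) (n : ℕ) :
    G.playFrom i σ u (n + 1) = G.step i σ (G.playFrom i σ u n) :=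
  Function.iterate_succ_apply' _ _ _

lemma playFrom_isPlay {i : Bool} {σ : Strategy V} (hv : G.ValidStrategy i σ) (u : V) :
    G.IsPlay (G.playFrom i σ u) := by
  intro n; rw [playFrom_succ]; exact G.step_edge hv _

lemma playFrom_consistent {i : Bool} {σ : Strategy V} (hm : Memoryless σ) (u : V) :
    G.Consistent i σ (G.playFrom i σ u) := by
  rw [G.consistent_iff hm]
  intro n hn
  rw [playFrom_succ, G.step_owner σ hn]

lemma isPlay_shift {p : ℕ → V} (hp : G.IsPlay p) (k : ℕ) :
    G.IsPlay (fun n => p (n + k)) := by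
  intro n
  have := hp (n + k)
  rwa [show n + k + 1 = n + 1 + k by omega] at this

lemma consistent_shift {i : Bool} {σ : Strategy V} (hm : Memoryless σ) {p : ℕ → V}
    (hc : G.Consistent i σ p) (k : ℕ) : G.Consistent i σ (fun n => p (n + k)) := by
  rw [G.consistent_iff hm] at hc ⊢
  intro n hn
  have := hc (n + k) hn
  rwa [show n + k + 1 = n + 1 + k by omega] at this

/-- Prepending a vertex to a play. -/
lemma prepend_play {i : Bool} {σ : Strategy V} (hm : Memoryless σ)
    {u w : V} (hedge : G.edge u w) (howned : G.owner u = i → w = σ [] u)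
    {q : ℕ → V} (hq : G.IsPlay q) (hqc : G.Consistent i σ q) (hq0 : q 0 = w) :
    G.IsPlay (fun n => Nat.casesOn n u q) ∧
      G.Consistent i σ (fun n => Nat.casesOn n u q) := by
  constructor
  · intro n
    cases n with
    | zero => simpa [hq0] using hedge
    | succ k => exact hq k
  · rw [G.consistent_iff hm]
    rw [G.consistent_iff hm] at hqc
    intro n hn
    cases n with
    | zero => simpa [hq0] using howned hn
    | succ k => exact hqc k hn

/-- In a finite game, a memoryless forcing strategy reaches the target within
`Fintype.card V` steps. -/
lemma within_of_forces [Fintype V] {i : Bool} {σ : Strategy V} {u : V} {U T' : Set V}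
    (hv : G.ValidStrategy i σ) (hm : Memoryless σ) (hf : G.ForcesVia i σ u U T') :
    G.Within i σ u U T' (Fintype.card V) := by
  classical
  intro p hp hc h0
  obtain ⟨n₀, hn₀T, hn₀U⟩ := hf p hp hc h0
  have hex : ∃ n, p n ∈ T' := ⟨n₀, hn₀T⟩
  set m := Nat.find hex with hmdef
  have hmT : p m ∈ T' := Nat.find_spec hex
  have hmle : m ≤ n₀ := Nat.find_min' hex hn₀T
  refine ⟨m, ?_, hmT, fun j hj => hn₀U j (lt_of_lt_of_le hj hmle)⟩
  by_contra hcard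
  push_neg at hcard
  -- pigeonhole: a repeated vertex before reaching T'
  obtain ⟨a, b, hne, hab⟩ := Fintype.exists_ne_map_eq_of_card_lt
    (fun k : Fin (Fintype.card V + 1) => p k) (by simp)
  wlog hltab : (a : ℕ) < (b : ℕ) generalizing a b
  · refine this b a hne.symm hab.symm ?_
    have : (a : ℕ) ≠ (b : ℕ) := fun he => hne (Fin.ext he)
    omega
  set A : ℕ := (a : ℕ)
  set B : ℕ := (b : ℕ)
  have hAB : A < B := hltab
  have hBcard : B ≤ Fintype.card V := by have := b.isLt; omega
  have hpAB : p A = p B := hab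
  have hBA : 0 < B - A := by omega
  -- the pumped play
  set cyc : ℕ → ℕ := fun n => if n < B then n else A + (n - A) % (B - A) with hcyc
  have hcyclt : ∀ n, cyc n < B := by
    intro n
    by_cases hn : n < B
    · simpa [hcyc, hn]
    · have : (n - A) % (B - A) < B - A := Nat.mod_lt _ hBA
      simp only [hcyc, if_neg hn]; omega
  have hkey : ∀ n, (cyc (n + 1) = cyc n + 1) ∨ (cyc n + 1 = B ∧ cyc (n + 1) = A) := by
    intro n
    by_cases h1 : n + 1 < B
    · left; simp [hcyc, h1, show n < B by omega]
    · by_cases h2 : n < B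
      · right
        have hnB : n + 1 = B := by omega
        constructor
        · simp [hcyc, h2]; omega
        · simp only [hcyc, if_neg h1]
          rw [show n + 1 - A = B - A by omega, Nat.mod_self]
          omega
      · -- n ≥ B
        have hmod : (n + 1 - A) % (B - A) = ((n - A) % (B - A) + 1) % (B - A) := by
          have : n + 1 - A = (n - A) + 1 := by omega
          rw [this]
          exact ((Nat.mod_modEq (n - A) (B - A)).add_right 1).symm
        set d := (n - A) % (B - A) with hd
        have hdlt : d < B - A := Nat.mod_lt _ hBA
        by_cases h3 : d + 1 = B - A
        · right
          constructor
          · simp only [hcyc, if_neg h2]; omega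
          · simp only [hcyc, if_neg h1, hmod, ← hd, h3, Nat.mod_self, Nat.add_zero]
        · left
          have : (d + 1) % (B - A) = d + 1 := Nat.mod_eq_of_lt (by omega)
          simp only [hcyc, if_neg h1, if_neg h2, hmod, ← hd, this]
          omega
  set r : ℕ → V := fun n => p (cyc n) with hr
  have hrp : G.IsPlay r := by
    intro n
    rcases hkey n with hk | ⟨hk1, hk2⟩
    · simp only [hr, hk]; exact hp (cyc n)
    · simp only [hr, hk2]
      have : p A = p (cyc n + 1) := by rw [hpAB, hk1]
      rw [this]; exact hp (cyc n)
  have hrc : G.Consistent i σ r := by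
    rw [G.consistent_iff hm]
    rw [G.consistent_iff hm] at hc
    intro n hn
    rcases hkey n with hk | ⟨hk1, hk2⟩
    · simp only [hr, hk]; exact hc (cyc n) hn
    · simp only [hr, hk2]
      have : p A = p (cyc n + 1) := by rw [hpAB, hk1]
      rw [this]; exact hc (cyc n) hn
  have hr0 : r 0 = u := by
    have : cyc 0 = 0 := by simp [hcyc]; omega
    simp only [hr, this, h0]
  obtain ⟨n₁, hn₁, -⟩ := hf r hrp hrc hr0
  have hlt : cyc n₁ < m := by have := hcyclt n₁; omega
  exact Nat.find_min hex hlt hn₁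

end ParityGame

/-- Gluing strategies: if `i` can force play from `v` via `U` to `T` and from
every vertex of `T` via `U` to `T'`, then `i` can force play from `v` via `U`
to `T'`. -/
theorem forces_trans {V : Type u} [Fintype V] (G : ParityGame V)
    (v : V) (i : Bool) (U T T' : Set V)
    (h : G.Forces i v U T) (h' : ∀ u ∈ T, G.Forces i u U T') :
    G.Forces i v U T' := by
  classical
  obtain ⟨σ, hσv, hσm, hσf⟩ := h
  set Q : V → ℕ → Prop := fun u n => ∃ τ : ParityGame.Strategy V,
      G.ValidStrategy i τ ∧ ParityGame.Memoryless τ ∧ G.Within i τ u U T' n with hQdef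
  set A : V → Prop := fun u => ∃ n, Q u n with hAdef
  have hTA : ∀ u ∈ T, A u := by
    intro u hu
    obtain ⟨τ, h1, h2, h3⟩ := h' u hu
    exact ⟨Fintype.card V, τ, h1, h2, G.within_of_forces h1 h2 h3⟩
  have H : ∀ u : V, ∃ τ : ParityGame.Strategy V, ∀ hu : A u,
      G.ValidStrategy i τ ∧ ParityGame.Memoryless τ ∧
        G.Within i τ u U T' (Nat.find hu) := by
    intro u
    by_cases hu : A u
    · obtain ⟨τ, hτ⟩ := Nat.find_spec hu
      exact ⟨τ, fun _ => hτ⟩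
    · exact ⟨σ, fun h => absurd h hu⟩
  choose str hstr using H
  set ρ : ParityGame.Strategy V := fun _ w => if A w then str w [] w else σ [] w with hρ
  have hρm : ParityGame.Memoryless ρ := fun _ _ _ => rfl
  have hρv : G.ValidStrategy i ρ := by
    intro hst w hw
    by_cases hwA : A w
    · simp only [hρ, if_pos hwA]
      exact (hstr w hwA).1 [] w hw
    · simp only [hρ, if_neg hwA]
      exact hσv [] w hw
  refine ⟨ρ, hρv, hρm, ?_⟩
  have main : ∀ n, ∀ u, ∀ hu : A u, Nat.find hu ≤ n →
      ∀ p, G.IsPlay p → G.Consistent i ρ p → p 0 = u →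
      ∃ m, p m ∈ T' ∧ ∀ j < m, p j ∈ U := by
    intro n
    induction n with
    | zero =>
      intro u hu hr p hp hc h0
      obtain ⟨hval, hmem, hwit⟩ := hstr u hu
      have h0' : Nat.find hu = 0 := Nat.le_zero.mp hr
      rw [h0'] at hwit
      obtain ⟨m, hm0, hmT', -⟩ := hwit (G.playFrom i (str u) u)
        (G.playFrom_isPlay hval u) (G.playFrom_consistent hmem u) rfl
      have hmz : m = 0 := Nat.le_zero.mp hm0
      subst hmz
      exact ⟨0, by rwa [h0], fun j hj => absurd hj (by omega)⟩
    | succ n ih =>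
      intro u hu hr p hp hc h0
      by_cases hT' : u ∈ T'
      · exact ⟨0, by rwa [h0], fun j hj => absurd hj (by omega)⟩
      obtain ⟨hval, hmem, hwit⟩ := hstr u hu
      -- u ∈ U and the rank is at least 1
      obtain ⟨m₀, hm₀le, hm₀T', hm₀U⟩ := hwit (G.playFrom i (str u) u)
        (G.playFrom_isPlay hval u) (G.playFrom_consistent hmem u) rfl
      have hm₀pos : 0 < m₀ := by
        rcases Nat.eq_zero_or_pos m₀ with hz | hz
        · subst hz; exact absurd hm₀T' hT'
        · exact hz
      have huU : u ∈ U := hm₀U 0 hm₀pos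
      have hrank1 : 1 ≤ Nat.find hu := le_trans hm₀pos hm₀le
      -- the successor
      set w := p 1 with hwdef
      have hedge : G.edge u w := by have := hp 0; rwa [h0] at this
      have howned : G.owner u = i → w = (str u) [] u := by
        intro ho
        have hcc := (G.consistent_iff hρm p).mp hc 0 (by rwa [h0])
        rw [h0] at hcc
        simp only [hρ, if_pos hu] at hcc
        exact hcc
      have hwwit : G.Within i (str u) w U T' (Nat.find hu - 1) := by
        intro q hq hqc hq0
        obtain ⟨hpl, hco⟩ := G.prepend_play hmem hedge howned hq hqc hq0
        obtain ⟨m, hm, hmT', hmU⟩ := hwit _ hpl hco rfl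
        have hm0 : 0 < m := by
          rcases Nat.eq_zero_or_pos m with hz | hz
          · subst hz; exact absurd hmT' hT'
          · exact hz
        refine ⟨m - 1, by omega, ?_, ?_⟩
        · rcases m with _ | m'
          · omega
          · exact hmT'
        · intro j hj
          have := hmU (j + 1) (by omega)
          simpa using this
      have hwA : A w := ⟨Nat.find hu - 1, str u, hval, hmem, hwwit⟩
      have hwrank : Nat.find hwA ≤ n := by
        have h1 : Nat.find hwA ≤ Nat.find hu - 1 :=
          Nat.find_min' hwA ⟨str u, hval, hmem, hwwit⟩
        omega
      obtain ⟨m, hmT', hmU⟩ := ih w hwA hwrank (fun j => p (j + 1))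
        (G.isPlay_shift hp 1) (G.consistent_shift hρm hc 1) rfl
      refine ⟨m + 1, hmT', ?_⟩
      intro j hj
      rcases j with _ | j'
      · rwa [h0]
      · exact hmU j' (by omega)
  -- the final assembly
  intro p hp hc h0
  by_cases hk : ∃ k, A (p k)
  · set k := Nat.find hk with hkdef
    have hkA : A (p k) := Nat.find_spec hk
    have hknot : ∀ j < k, ¬ A (p j) := fun j hj => Nat.find_min hk hj
    set q : ℕ → V := fun n => if n < k then p n else G.playFrom i σ (p k) (n - k) with hq
    have hqp : ∀ j ≤ k, q j = p j := by
      intro j hj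
      by_cases hlt : j < k
      · simp [hq, hlt]
      · have hjk : j = k := by omega
        subst hjk
        simp only [hq, if_neg hlt, Nat.sub_self]
        exact G.playFrom_zero _ _ _
    have hqpl : G.IsPlay q := by
      intro n
      by_cases hlt : n < k
      · rw [hqp n (by omega), hqp (n + 1) (by omega)]; exact hp n
      · have h2 : ¬ n + 1 < k := by omega
        simp only [hq, if_neg hlt, if_neg h2]
        rw [show n + 1 - k = (n - k) + 1 by omega, G.playFrom_succ]
        exact G.step_edge hσv _
    have hqc : G.Consistent i σ q := by
      rw [G.consistent_iff hσm]
      intro n hn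
      by_cases hlt : n < k
      · rw [hqp n (by omega)] at hn ⊢
        rw [hqp (n + 1) (by omega)]
        have hcc := (G.consistent_iff hρm p).mp hc n hn
        simp only [hρ, if_neg (hknot n hlt)] at hcc
        exact hcc
      · have h2 : ¬ n + 1 < k := by omega
        simp only [hq, if_neg hlt, if_neg h2] at hn ⊢
        rw [show n + 1 - k = (n - k) + 1 by omega, G.playFrom_succ, G.step_owner σ hn]
    have hq0 : q 0 = v := by rw [hqp 0 (by omega), h0]
    obtain ⟨n₀, hn₀T, hn₀U⟩ := hσf q hqpl hqc hq0
    have hkn₀ : k ≤ n₀ := by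
      by_contra hcon
      push_neg at hcon
      have hAn₀ := hTA _ hn₀T
      rw [hqp n₀ (by omega)] at hAn₀
      exact hknot n₀ hcon hAn₀
    obtain ⟨m, hmT', hmU⟩ := main (Nat.find hkA) (p k) hkA le_rfl
      (fun j => p (j + k)) (G.isPlay_shift hp k) (G.consistent_shift hρm hc k)
      (by simp)
    refine ⟨m + k, hmT', ?_⟩
    intro j hj
    by_cases hjk : j < k
    · rw [← hqp j (by omega)]
      exact hn₀U j (lt_of_lt_of_le hjk hkn₀)
    · have := hmU (j - k) (by omega)
      rwa [show j - k + k = j by omega] at this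
  · -- p never visits A, hence is consistent with σ and must reach T ⊆ A
    exfalso
    push_neg at hk
    have hcσ : G.Consistent i σ p := by
      rw [G.consistent_iff hσm]
      intro n hn
      have hcc := (G.consistent_iff hρm p).mp hc n hn
      simp only [hρ, if_neg (hk n)] at hcc
      exact hcc
    obtain ⟨n₀, hn₀, -⟩ := hσf p hp hcσ h0
    exact hk n₀ (hTA _ hn₀)
end

section
/- An equivalence relation R is a governed stuttering bisimulation if and only if for all v R w: (a) Ω(v) = Ω(w); (b) for every player i and every R-class C ≠ [v]_R, player i can force play from v via [v]_R to C iff i can force play from w via [w]_R to C; (c) for each player i, i can force divergence within the R-class from v iff from w. -/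
universe u

namespace ParityGame

/-- The `R`-class of `v`. -/
def cls {V : Type u} (R : V → V → Prop) (v : V) : Set V := {x | R v x}

variable {V : Type u} (G : ParityGame V)

/-- Governed stuttering bisimulations. -/
def IsGSB (R : V → V → Prop) : Prop :=
  Equivalence R ∧ ∀ v w, R v w →
    G.prio v = G.prio w ∧
    (∀ u, ¬ R v u → (∃ v', G.edge v v' ∧ R u v') →
      G.Forces (G.owner v) w (cls R w) (cls R u)) ∧
    (∀ i : Bool, G.Diverges i v (cls R v) → G.Diverges i w (cls R w))

end ParityGame

namespace ParityGame

open Classical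

variable {V : Type u} (G : ParityGame V)

/-- Some successor of a vertex. -/
noncomputable def anySucc (x : V) : V := (G.total x).choose

lemma edge_anySucc (x : V) : G.edge x (G.anySucc x) := (G.total x).choose_spec

lemma bool_ne {b i : Bool} (h : b ≠ i) : b = !i := by cases b <;> cases i <;> simp_all

lemma bool_not_ne (i : Bool) : (!i) ≠ i := by cases i <;> decide

/-- A memoryless strategy moving into `S` whenever possible. -/
noncomputable def toStr (S : Set V) : Strategy V :=
  fun _ x => if h : ∃ y, G.edge x y ∧ y ∈ S then h.choose else G.anySucc x

lemma toStr_edge (S : Set V) (h : List V) (x : V) : G.edge x (G.toStr S h x) := by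
  unfold toStr
  split
  · next hex => exact hex.choose_spec.1
  · exact G.edge_anySucc x

lemma toStr_valid (S : Set V) (i : Bool) : G.ValidStrategy i (G.toStr S) :=
  fun h x _ => G.toStr_edge S h x

lemma toStr_memoryless (S : Set V) : Memoryless (G.toStr S) := fun _ _ _ => rfl

lemma toStr_mem (S : Set V) (h : List V) {x : V} (hex : ∃ y, G.edge x y ∧ y ∈ S) :
    G.toStr S h x ∈ S := by
  unfold toStr
  rw [dif_pos hex]
  exact hex.choose_spec.2

/-- The play obtained by letting player `i` use `σ` and the opponent use `τ`. -/
noncomputable def play2 (σ τ : Strategy V) (i : Bool) (x : V) : ℕ → V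
  | 0 => x
  | n + 1 =>
      if G.owner (play2 σ τ i x n) = i then σ [] (play2 σ τ i x n)
      else τ [] (play2 σ τ i x n)

lemma play2_isPlay {σ τ : Strategy V} {i : Bool} (x : V)
    (hσ : G.ValidStrategy i σ) (hτ : G.ValidStrategy (!i) τ) :
    G.IsPlay (G.play2 σ τ i x) := by
  intro n
  by_cases h : G.owner (G.play2 σ τ i x n) = i
  · rw [show G.play2 σ τ i x (n+1) = σ [] (G.play2 σ τ i x n) from if_pos h]
    exact hσ [] _ h
  · rw [show G.play2 σ τ i x (n+1) = τ [] (G.play2 σ τ i x n) from if_neg h]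
    exact hτ [] _ (bool_ne h)

lemma play2_consistent_left {σ τ : Strategy V} {i : Bool} (x : V) (hm : Memoryless σ) :
    G.Consistent i σ (G.play2 σ τ i x) := by
  intro n h
  rw [show G.play2 σ τ i x (n+1) = σ [] (G.play2 σ τ i x n) from if_pos h]
  exact hm [] _ _

lemma play2_consistent_right {σ τ : Strategy V} {i : Bool} (x : V) (hm : Memoryless τ) :
    G.Consistent (!i) τ (G.play2 σ τ i x) := by
  intro n h
  have h' : ¬ G.owner (G.play2 σ τ i x n) = i := by rw [h]; exact bool_not_ne i
  rw [show G.play2 σ τ i x (n+1) = τ [] (G.play2 σ τ i x n) from if_neg h']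
  exact hm [] _ _

lemma play2_zero (σ τ : Strategy V) (i : Bool) (x : V) : G.play2 σ τ i x 0 = x := rfl

/-- Two opposing forcing strategies with incompatible targets are contradictory. -/
lemma forces_forces_contra {i : Bool} {x : V} {U T₁ T₂ : Set V}
    (h₁ : G.Forces i x U T₁) (h₂ : G.Forces (!i) x U T₂)
    (d₁ : ∀ t, t ∈ U → t ∉ T₁) (d₂ : ∀ t, t ∈ U → t ∉ T₂)
    (d₃ : ∀ t, t ∈ T₁ → t ∉ T₂) : False := by
  obtain ⟨σ, hσv, hσm, hσf⟩ := h₁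
  obtain ⟨τ, hτv, hτm, hτf⟩ := h₂
  obtain ⟨n, hn, hnp⟩ := hσf (G.play2 σ τ i x) (G.play2_isPlay x hσv hτv)
    (G.play2_consistent_left x hσm) rfl
  obtain ⟨m, hm, hmp⟩ := hτf (G.play2 σ τ i x) (G.play2_isPlay x hσv hτv)
    (G.play2_consistent_right x hτm) rfl
  rcases lt_trichotomy n m with h | h | h
  · exact d₁ _ (hmp n h) hn
  · exact d₃ _ hn (h ▸ hm)
  · exact d₂ _ (hnp m h) hm

/-- A forcing strategy and an opposing divergence strategy are contradictory. -/
lemma forces_diverges_contra {i : Bool} {x : V} {U T : Set V}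
    (h₁ : G.Forces i x U T) (h₂ : G.Diverges (!i) x U)
    (d : ∀ t, t ∈ U → t ∉ T) : False := by
  obtain ⟨σ, hσv, hσm, hσf⟩ := h₁
  obtain ⟨τ, hτv, hτm, hτf⟩ := h₂
  obtain ⟨n, hn, _⟩ := hσf (G.play2 σ τ i x) (G.play2_isPlay x hσv hτv)
    (G.play2_consistent_left x hσm) rfl
  exact d _ (hτf (G.play2 σ τ i x) (G.play2_isPlay x hσv hτv)
    (G.play2_consistent_right x hτm) rfl n) hn

/-- Attractor stages for player `i` towards `T` through `U`. -/
def attr (i : Bool) (U T : Set V) : ℕ → Set V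
  | 0 => T
  | n + 1 => attr i U T n ∪ {x | x ∈ U ∧
      ((G.owner x = i ∧ ∃ y, G.edge x y ∧ y ∈ attr i U T n) ∨
       (G.owner x ≠ i ∧ ∀ y, G.edge x y → y ∈ attr i U T n))}

lemma attr_zero (i : Bool) (U T : Set V) : G.attr i U T 0 = T := rfl

lemma attr_succ (i : Bool) (U T : Set V) (n : ℕ) :
    G.attr i U T (n + 1) = G.attr i U T n ∪ {x | x ∈ U ∧
      ((G.owner x = i ∧ ∃ y, G.edge x y ∧ y ∈ G.attr i U T n) ∨
       (G.owner x ≠ i ∧ ∀ y, G.edge x y → y ∈ G.attr i U T n))} := rfl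

lemma attr_mono (i : Bool) (U T : Set V) : Monotone (G.attr i U T) :=
  monotone_nat_of_le_succ fun n => by
    rw [attr_succ]; exact Set.subset_union_left

def Attr (i : Bool) (U T : Set V) : Set V := ⋃ n, G.attr i U T n

lemma mem_attr_of_mem {i : Bool} {U T : Set V} {x : V} {n : ℕ} (h : x ∈ G.attr i U T n) :
    x ∈ G.Attr i U T := Set.mem_iUnion.2 ⟨n, h⟩

lemma target_subset_Attr (i : Bool) (U T : Set V) : T ⊆ G.Attr i U T :=
  fun _ h => G.mem_attr_of_mem (n := 0) ((G.attr_zero i U T).symm ▸ h)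

lemma mem_Attr_of_own {i : Bool} {U T : Set V} {x y : V}
    (hU : x ∈ U) (ho : G.owner x = i) (hxy : G.edge x y) (hy : y ∈ G.Attr i U T) :
    x ∈ G.Attr i U T := by
  obtain ⟨n, hn⟩ := Set.mem_iUnion.1 hy
  refine G.mem_attr_of_mem (n := n + 1) ?_
  rw [attr_succ]
  exact Or.inr ⟨hU, Or.inl ⟨ho, y, hxy, hn⟩⟩

lemma exists_level [Fintype V] {i : Bool} {U T : Set V} {x : V}
    (h : ∀ y, G.edge x y → y ∈ G.Attr i U T) :
    ∃ N, ∀ y, G.edge x y → y ∈ G.attr i U T N := by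
  classical
  set f : V → ℕ := fun y => if h : ∃ n, y ∈ G.attr i U T n then Nat.find h else 0 with hf
  refine ⟨Finset.univ.sup f, fun y hy => ?_⟩
  have h1 : ∃ n, y ∈ G.attr i U T n := Set.mem_iUnion.1 (h y hy)
  have h2 : y ∈ G.attr i U T (f y) := by
    rw [hf]; simp only [dif_pos h1]; exact Nat.find_spec h1
  exact G.attr_mono i U T (Finset.le_sup (Finset.mem_univ y)) h2

lemma mem_Attr_of_opp [Fintype V] {i : Bool} {U T : Set V} {x : V}
    (hU : x ∈ U) (ho : G.owner x ≠ i) (h : ∀ y, G.edge x y → y ∈ G.Attr i U T) :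
    x ∈ G.Attr i U T := by
  obtain ⟨N, hN⟩ := G.exists_level h
  refine G.mem_attr_of_mem (n := N + 1) ?_
  rw [attr_succ]
  exact Or.inr ⟨hU, Or.inr ⟨ho, hN⟩⟩

/-- Rank of a vertex in the attractor. -/
noncomputable def rk (i : Bool) (U T : Set V) (x : V) : ℕ :=
  if h : ∃ n, x ∈ G.attr i U T n then Nat.find h else 0

/-- The attractor strategy for player `i`. -/
noncomputable def attrStr (i : Bool) (U T : Set V) : Strategy V :=
  fun _ x =>
    if h : ∃ y, G.edge x y ∧ y ∈ G.attr i U T (G.rk i U T x - 1) then h.choose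
    else G.anySucc x

lemma attrStr_valid (i j : Bool) (U T : Set V) : G.ValidStrategy j (G.attrStr i U T) := by
  intro h x _
  unfold attrStr
  split
  · next hex => exact hex.choose_spec.1
  · exact G.edge_anySucc x

lemma attrStr_memoryless (i : Bool) (U T : Set V) : Memoryless (G.attrStr i U T) :=
  fun _ _ _ => rfl

lemma attrStr_step {i : Bool} {U T : Set V} {x : V} {k : ℕ}
    (hx : x ∈ G.attr i U T (k + 1)) (hk : x ∉ G.attr i U T k)
    (hcl : ∃ y, G.edge x y ∧ y ∈ G.attr i U T k) (h : List V) :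
    G.attrStr i U T h x ∈ G.attr i U T k := by
  have hex : ∃ n, x ∈ G.attr i U T n := ⟨k + 1, hx⟩
  have hrk : G.rk i U T x = k + 1 := by
    have h1 : G.rk i U T x = Nat.find hex := dif_pos hex
    have h2 : Nat.find hex ≤ k + 1 := Nat.find_min' hex hx
    have h3 : ¬ Nat.find hex ≤ k := by
      intro hle
      exact hk (G.attr_mono i U T hle (Nat.find_spec hex))
    omega
  have hrk' : G.rk i U T x - 1 = k := by omega
  unfold attrStr
  rw [hrk', dif_pos hcl]
  exact hcl.choose_spec.2

lemma attr_forcesVia (i : Bool) (U T : Set V) :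
    ∀ k, ∀ x ∈ G.attr i U T k, ∀ p, G.IsPlay p →
      G.Consistent i (G.attrStr i U T) p → p 0 = x →
      ∃ n, p n ∈ T ∧ ∀ j < n, p j ∈ U := by
  intro k
  induction k with
  | zero =>
    intro x hx p _ _ h0
    exact ⟨0, h0 ▸ hx, by omega⟩
  | succ k ih =>
    intro x hx p hpl hpc h0
    by_cases hk : x ∈ G.attr i U T k
    · exact ih x hk p hpl hpc h0
    · have hx' : x ∈ U ∧
          ((G.owner x = i ∧ ∃ y, G.edge x y ∧ y ∈ G.attr i U T k) ∨
           (G.owner x ≠ i ∧ ∀ y, G.edge x y → y ∈ G.attr i U T k)) := by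
        rw [attr_succ] at hx
        rcases hx with h | h
        · exact absurd h hk
        · exact h
      have h1 : p 1 ∈ G.attr i U T k := by
        rcases hx'.2 with ⟨ho, hcl⟩ | ⟨ho, hall⟩
        · have := hpc 0 (h0 ▸ ho)
          rw [this, h0]
          exact G.attrStr_step hx hk hcl _
        · have := hpl 0
          rw [h0] at this
          exact hall _ this
      obtain ⟨n, hn, hpre⟩ := ih (p 1) h1 (fun m => p (m + 1)) (fun m => hpl (m + 1))
        (fun m hm => hpc (m + 1) hm) rfl
      refine ⟨n + 1, hn, fun j hj => ?_⟩
      match j with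
      | 0 => exact h0 ▸ hx'.1
      | j + 1 => exact hpre j (by omega)

lemma forces_of_mem_Attr {i : Bool} {U T : Set V} {x : V} (h : x ∈ G.Attr i U T) :
    G.Forces i x U T := by
  obtain ⟨k, hk⟩ := Set.mem_iUnion.1 h
  exact ⟨G.attrStr i U T, G.attrStr_valid i i U T, G.attrStr_memoryless i U T,
    fun p hpl hpc h0 => G.attr_forcesVia i U T k x hk p hpl hpc h0⟩

lemma avoid_spec [Fintype V] {i : Bool} {U T : Set V} {x : V} (hx : x ∉ G.Attr i U T)
    {p : ℕ → V} (hpl : G.IsPlay p)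
    (hpc : G.Consistent (!i) (G.toStr {y | y ∉ G.Attr i U T}) p) (h0 : p 0 = x) :
    ∀ n, (∀ j < n, p j ∈ U) → p n ∉ G.Attr i U T := by
  intro n
  induction n with
  | zero => intro _; exact h0 ▸ hx
  | succ n ih =>
    intro hpre
    have hnA : p n ∉ G.Attr i U T := ih (fun j hj => hpre j (by omega))
    have hnU : p n ∈ U := hpre n (by omega)
    by_cases ho : G.owner (p n) = i
    · intro hA
      exact hnA (G.mem_Attr_of_own hnU ho (hpl n) hA)
    · by_cases hex : ∃ y, G.edge (p n) y ∧ y ∈ {y | y ∉ G.Attr i U T}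
      · have := hpc n (bool_ne ho)
        rw [this]
        exact G.toStr_mem _ _ hex
      · push_neg at hex
        exact absurd (G.mem_Attr_of_opp hnU ho (fun y hy => not_not.1 (hex y hy))) hnA

lemma mem_Attr_of_forces [Fintype V] {i : Bool} {U T : Set V} {x : V}
    (h : G.Forces i x U T) : x ∈ G.Attr i U T := by
  by_contra hx
  obtain ⟨σ, hσv, hσm, hσf⟩ := h
  set τ := G.toStr {y | y ∉ G.Attr i U T} with hτ
  obtain ⟨n, hn, hpre⟩ := hσf (G.play2 σ τ i x)
    (G.play2_isPlay x hσv (G.toStr_valid _ _)) (G.play2_consistent_left x hσm) rfl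
  exact G.avoid_spec hx (G.play2_isPlay x hσv (G.toStr_valid _ _))
    (G.play2_consistent_right x (G.toStr_memoryless _)) rfl n hpre
    (G.target_subset_Attr i U T hn)

/-- Prepend a vertex to a play. -/
def pcons (y : V) (p : ℕ → V) : ℕ → V
  | 0 => y
  | n + 1 => p n

lemma pcons_isPlay {y : V} {p : ℕ → V} (h0 : G.edge y (p 0)) (hp : G.IsPlay p) :
    G.IsPlay (pcons y p) := by
  intro n
  match n with
  | 0 => exact h0
  | n + 1 => exact hp n

lemma pcons_consistent {j : Bool} {τ : Strategy V} {y : V} {p : ℕ → V}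
    (hm : Memoryless τ) (hy : G.owner y ≠ j) (hp : G.Consistent j τ p) :
    G.Consistent j τ (pcons y p) := by
  intro n hn
  match n with
  | 0 => exact absurd hn hy
  | n + 1 =>
    have := hp n hn
    rw [show pcons y p (n + 1 + 1) = p (n + 1) from rfl, this]
    exact hm _ _ _

lemma cls_eq {R : V → V → Prop} (e : Equivalence R) {a b : V} (hab : R a b) :
    cls R a = cls R b :=
  Set.ext fun _ => ⟨fun h => e.trans (e.symm hab) h, fun h => e.trans hab h⟩

/-- One-step forcing. -/
lemma forces_step {i : Bool} {v v' : V} {U T : Set V}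
    (ho : G.owner v = i) (hvv' : G.edge v v') (hT : v' ∈ T) (hU : v ∈ U) :
    G.Forces i v U T := by
  refine ⟨fun _ x => if x = v then v' else G.anySucc x, ?_, fun _ _ _ => rfl, ?_⟩
  · intro h x _
    by_cases hx : x = v
    · simp only [hx, if_pos rfl]; exact hvv'
    · simp only [if_neg hx]; exact G.edge_anySucc x
  · intro p hpl hpc h0
    have h1 : p 1 = v' := by
      have h2 := hpc 0 (h0 ▸ ho)
      rw [h2, h0]
      show (if v = v then v' else G.anySucc v) = v'
      exact if_pos rfl
    refine ⟨1, h1 ▸ hT, fun j hj => ?_⟩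
    match j with
    | 0 => exact h0 ▸ hU

/-- The key transfer lemma: forcing transfers across a governed stuttering
bisimulation. -/
lemma transfer [Fintype V] {R : V → V → Prop} (hg : G.IsGSB R) {i : Bool} {v w u : V}
    (hvw : R v w) (hu : ¬ R v u) (hf : G.Forces i v (cls R v) (cls R u)) :
    G.Forces i w (cls R w) (cls R u) := by
  obtain ⟨e, h⟩ := hg
  have clsU : cls R w = cls R v := cls_eq e (e.symm hvw)
  rw [clsU]
  have hUC : ∀ x, x ∈ cls R v → x ∉ cls R u := fun x h1 h2 => hu (e.trans h1 (e.symm h2))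
  have hvU : v ∈ cls R v := e.refl v
  have hwU : w ∈ cls R v := hvw
  -- Step 1 : a witness edge from the class of `v` into the class of `u`
  obtain ⟨σ, hσv, hσm, hσf⟩ := hf
  have hf' : G.Forces i v (cls R v) (cls R u) := ⟨σ, hσv, hσm, hσf⟩
  obtain ⟨n₀, hn₀, hpre₀⟩ := hσf (G.play2 σ (fun _ x => G.anySucc x) i v)
    (G.play2_isPlay v hσv (fun h x _ => G.edge_anySucc x))
    (G.play2_consistent_left v hσm) rfl
  match n₀, hn₀, hpre₀ with
  | 0, hn₀, _ => exact absurd hn₀ (hUC v hvU)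
  | m + 1, hn₀, hpre₀ =>
  set q := G.play2 σ (fun _ x => G.anySucc x) i v with hq
  have hx₀U : q m ∈ cls R v := hpre₀ m (by omega)
  have hx₀e : G.edge (q m) (q (m + 1)) :=
    G.play2_isPlay v hσv (fun h x _ => G.edge_anySucc x) m
  by_cases hA : ∃ x c, R v x ∧ G.owner x = i ∧ G.edge x c ∧ R u c
  · -- Case A : some `i`-owned vertex of the class has an edge into `cls R u`
    obtain ⟨x, c, hx, hox, hxc, huc⟩ := hA
    have hxw : R x w := e.trans (e.symm hx) hvw
    have h2 := (h x w hxw).2.1 u (fun h' => hu (e.trans hx h')) ⟨c, hxc, huc⟩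
    rw [hox, clsU] at h2
    exact h2
  · -- Case B : every edge from the class into `cls R u` is owned by the opponent
    have Hall : ∀ y, R v y → G.Forces (!i) y (cls R v) (cls R u) := by
      intro y hy
      have hox₀ : G.owner (q m) = !i :=
        bool_ne (fun h' => hA ⟨q m, q (m + 1), hx₀U, h', hx₀e, hn₀⟩)
      have h2 := (h (q m) y (e.trans (e.symm hx₀U) hy)).2.1 u
        (fun h' => hu (e.trans hx₀U h')) ⟨q (m + 1), hx₀e, hn₀⟩
      rw [hox₀, cls_eq e (e.symm hy)] at h2
      exact h2
    -- Step 4 : successors of `i`-owned vertices of the class stay in the class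
    have step4 : ∀ y z, R v y → G.owner y = i → G.edge y z → R v z := by
      intro y z hy hoy hyz
      by_contra hz
      have hzC : ¬ R u z := fun h' => hA ⟨y, z, hy, hoy, hyz, h'⟩
      obtain ⟨τ, hτv, hτm, hτf⟩ := Hall y hy
      set r := pcons y (G.play2 τ (fun _ x => G.anySucc x) (!i) z) with hr
      have hrpl : G.IsPlay r :=
        G.pcons_isPlay hyz (G.play2_isPlay z hτv (fun h x _ => G.edge_anySucc x))
      have hrc : G.Consistent (!i) τ r := by
        refine G.pcons_consistent hτm ?_ (G.play2_consistent_left z hτm)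
        rw [hoy]
        exact fun hc => (bool_not_ne i) hc.symm
      obtain ⟨k, hk, hkpre⟩ := hτf r hrpl hrc rfl
      match k, hk, hkpre with
      | 0, hk, _ => exact hUC y hy hk
      | 1, hk, _ => exact hzC hk
      | k + 2, _, hkpre => exact hz (hkpre 1 (by omega))
    -- Step 5 : successors of opponent-owned vertices stay in the two classes
    have step5 : ∀ y z, R v y → G.owner y = !i → G.edge y z → (R v z ∨ R u z) := by
      intro y z hy hoy hyz
      by_contra hzz
      push_neg at hzz
      obtain ⟨hz, hzC⟩ := hzz
      have h2 := (h y v (e.symm hy)).2.1 z (fun h' => hz (e.trans hy h')) ⟨z, hyz, e.refl z⟩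
      rw [hoy] at h2
      refine G.forces_forces_contra hf' h2 hUC ?_ ?_
      · exact fun t ht ht' => hz (e.trans ht (e.symm ht'))
      · exact fun t ht ht' => hzC (e.trans ht (e.symm ht'))
    -- Main argument via the attractor
    have hvA : v ∈ G.Attr i (cls R v) (cls R u) := G.mem_Attr_of_forces hf'
    by_cases hwA : w ∈ G.Attr i (cls R v) (cls R u)
    · exact G.forces_of_mem_Attr hwA
    exfalso
    set B : Set V := {x | x ∈ cls R v ∧ x ∉ G.Attr i (cls R v) (cls R u)} with hB
    have hdivB : ∀ p, G.IsPlay p → G.Consistent (!i) (G.toStr B) p → p 0 = w →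
        ∀ n, p n ∈ B := by
      intro p hpl hpc h0 n
      induction n with
      | zero => exact h0 ▸ ⟨hwU, hwA⟩
      | succ n ih =>
        obtain ⟨hnU, hnA⟩ := ih
        by_cases ho : G.owner (p n) = i
        · refine ⟨step4 _ _ hnU ho (hpl n), fun hA' => ?_⟩
          exact hnA (G.mem_Attr_of_own hnU ho (hpl n) hA')
        · have hex : ∃ y, G.edge (p n) y ∧ y ∈ B := by
            by_cases hall : ∀ y, G.edge (p n) y → y ∈ G.Attr i (cls R v) (cls R u)
            · exact absurd (G.mem_Attr_of_opp hnU ho hall) hnA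
            · push_neg at hall
              obtain ⟨y, hy, hyA⟩ := hall
              rcases step5 _ _ hnU (bool_ne ho) hy with h' | h'
              · exact ⟨y, hy, h', hyA⟩
              · exact absurd (G.target_subset_Attr i (cls R v) (cls R u) h') hyA
          have h2 := hpc n (bool_ne ho)
          rw [h2]
          exact G.toStr_mem _ _ hex
    have hdivw : G.Diverges (!i) w (cls R w) := by
      rw [clsU]
      exact ⟨G.toStr B, G.toStr_valid _ _, G.toStr_memoryless _,
        fun p hpl hpc h0 n => (hdivB p hpl hpc h0 n).1⟩
    have hdivv : G.Diverges (!i) v (cls R v) := (h w v (e.symm hvw)).2.2 (!i) hdivw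
    exact G.forces_diverges_contra hf' hdivv hUC

end ParityGame
/-- Symmetric characterisation of governed stuttering bisimulation. -/
theorem isGSB_iff_symmetric_form {V : Type u} [Fintype V] (G : ParityGame V)
    (R : V → V → Prop) :
    G.IsGSB R ↔
      (Equivalence R ∧ ∀ v w, R v w →
        G.prio v = G.prio w ∧
        (∀ (i : Bool) (u : V), ¬ R v u →
          (G.Forces i v (ParityGame.cls R v) (ParityGame.cls R u) ↔
            G.Forces i w (ParityGame.cls R w) (ParityGame.cls R u))) ∧
        (∀ i : Bool,
          G.Diverges i v (ParityGame.cls R v) ↔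
            G.Diverges i w (ParityGame.cls R w))) := by
  constructor
  · rintro ⟨e, h⟩
    refine ⟨e, fun v w hvw => ?_⟩
    refine ⟨(h v w hvw).1, ?_,
      fun i => ⟨(h v w hvw).2.2 i, (h w v (e.symm hvw)).2.2 i⟩⟩
    intro i u hu
    constructor
    · exact G.transfer ⟨e, h⟩ hvw hu
    · intro hfw
      have hu' : ¬ R w u := fun h' => hu (e.trans hvw h')
      exact G.transfer ⟨e, h⟩ (e.symm hvw) hu' hfw
  · rintro ⟨e, h⟩
    refine ⟨e, fun v w hvw => ?_⟩
    refine ⟨(h v w hvw).1, ?_, fun i hd => ((h v w hvw).2.2 i).1 hd⟩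
    rintro u hu ⟨v', hvv', huv'⟩
    have h1 : G.Forces (G.owner v) v (ParityGame.cls R v) (ParityGame.cls R u) :=
      G.forces_step rfl hvv' huv' (e.refl v)
    exact ((h v w hvw).2.1 (G.owner v) u hu).1 h1
end
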